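/- Fix k ≥ 2. For every function f with f(n) = o(n²) and f(n) ≥ 2n, and every large n, the graph G obtained from the Turán graph T_k(n) by moving ⌈f(n)^{1/2}⌉ vertices from one class to another satisfies e(G) ≥ t_k(n) − O(f(n)), and any way to transform G into T_k(n) requires adding and deleting at least Ω(f(n)^{1/2}·n) edges. -/

import Mathlib

open SimpleGraph Filter

/-- Number of edges of a graph. -/
noncomputable def edgeCount {V : Type*} (G : SimpleGraph V) : ℕ := Nat.card G.edgeSet

/-- `tk k n` is the number of edges of the `k`-partite Turán graph on `n` vertices. -/
noncomputable def tk (k n : ℕ) : ℕ := edgeCount (turanGraph n k)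

/-- The graph obtained from the Turán graph `turanGraph n k` (whose classes are the
residues mod `k`) by moving `m` vertices from class `1` to class `0`. -/
def movedTuran (n k m : ℕ) : SimpleGraph (Fin n) :=
  SimpleGraph.fromRel (fun x y =>
    (if (x : ℕ) % k = 1 ∧ (x : ℕ) < k * m then 0 else (x : ℕ) % k) ≠
    (if (y : ℕ) % k = 1 ∧ (y : ℕ) < k * m then 0 else (y : ℕ) % k))

open Finset

/-!
Recolouring `m` vertices from class `1` to class `0` of the Turán graph removes their `m |V₀|`
edges to class `0` and adds `m (|V₁| - m)` edges to the rest of class `1`; as `|V₀| ≤ |V₁| + 1`,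
at most `m² + m` edges are lost.

The new class `0` is an independent set of `|V₀| + m` vertices, whereas every part of a relabelled
Turán graph has at most `|V₀|` vertices. Inside that set each vertex is therefore adjacent in the
relabelled Turán graph to at least `m` others, and these `≥ m |V₀| / 2 ≥ m n / 2k` edges all lie in
the symmetric difference. Finally `f = o(n²)` makes `m = ⌈√f⌉ ≤ n / k`, so that the recolouring
is possible.
-/

namespace SimpleGraph

variable {V α : Type*} [Fintype V]

theorem card_edgeFinset_add_card_sdiff [DecidableEq V] (G H : SimpleGraph V)
    [DecidableRel G.Adj] [DecidableRel H.Adj] :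
    #G.edgeFinset + #(H \ G).edgeFinset = #H.edgeFinset + #(G \ H).edgeFinset := by
  rw [edgeFinset_sdiff, edgeFinset_sdiff, add_comm, card_sdiff_add_card, add_comm,
    card_sdiff_add_card, union_comm]

theorem card_edgeFinset_comap_sdiff_le [DecidableEq V] [DecidableEq α] {c c' : V → α}
    {S : Finset V} {i j : α} (hS : ∀ v ∈ S, c v = i ∧ c' v = j) (hc : ∀ v ∉ S, c' v = c v) :
    #((⊤ : SimpleGraph α).comap c \ (⊤ : SimpleGraph α).comap c').edgeFinset ≤
      #S * #{v | c v = j} := by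
  rw [← card_product]
  refine (card_le_card fun e he => ?_).trans (card_image_le (f := fun p : V × V => s(p.1, p.2)))
  induction e using Sym2.ind with
  | _ v w =>
    simp only [mem_edgeFinset, mem_edgeSet, sdiff_adj, comap_adj, top_adj, not_not] at he
    simp only [mem_image, mem_product, mem_filter, mem_univ, true_and, Prod.exists]
    by_cases hv : v ∈ S <;> by_cases hw : w ∈ S
    · exact absurd ((hS v hv).1.trans (hS w hw).1.symm) he.1
    · exact ⟨v, w, ⟨hv, (hc w hw).symm.trans (he.2.symm.trans (hS v hv).2)⟩, rfl⟩
    · exact ⟨w, v, ⟨hw, (hc v hv).symm.trans (he.2.trans (hS w hw).2)⟩, Sym2.eq_swap⟩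
    · exact absurd (by rw [← hc v hv, ← hc w hw, he.2]) he.1

theorem card_mul_sub_le_card_edgeFinset_comap_sdiff [DecidableEq V] [DecidableEq α]
    {c c' : V → α} {S : Finset V} {i j : α} (hij : i ≠ j) (hS : ∀ v ∈ S, c v = i ∧ c' v = j)
    (hc : ∀ v ∉ S, c' v = c v) :
    #S * (#{v | c v = i} - #S) ≤
      #((⊤ : SimpleGraph α).comap c' \ (⊤ : SimpleGraph α).comap c).edgeFinset := by
  set P : Finset V := {v | c v = i}
  have hSP : S ⊆ P := fun v hv => mem_filter.2 ⟨mem_univ v, (hS v hv).1⟩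
  have hinj : Set.InjOn (fun p : V × V => s(p.1, p.2)) (S ×ˢ (P \ S) : Finset (V × V)) := by
    rintro ⟨v, w⟩ hvw ⟨v', w'⟩ hvw' h
    simp only [coe_product, coe_sdiff, Set.mem_prod, Set.mem_sdiff, mem_coe] at hvw hvw'
    rcases Sym2.mk_eq_mk_iff.1 h with h | h
    · exact h
    · simp only [Prod.swap_prod_mk, Prod.mk.injEq] at h
      exact absurd (h.1 ▸ hvw.1) hvw'.2.2
  rw [← card_sdiff_of_subset hSP, ← card_product, ← card_image_of_injOn hinj]
  refine card_le_card fun e he => ?_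
  obtain ⟨⟨v, w⟩, hvw, rfl⟩ := mem_image.1 he
  obtain ⟨hv, hwi, hw⟩ : v ∈ S ∧ c w = i ∧ w ∉ S := by simpa [P] using hvw
  simp only [mem_edgeFinset, mem_edgeSet, sdiff_adj, comap_adj, top_adj, not_not]
  rw [(hS v hv).1, (hS v hv).2, hc w hw, hwi]
  exact ⟨hij.symm, rfl⟩

theorem card_edgeFinset_comap_add_le [DecidableEq V] [DecidableEq α] {c c' : V → α}
    {S : Finset V} {i j : α} (hij : i ≠ j) (hS : ∀ v ∈ S, c v = i ∧ c' v = j)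
    (hc : ∀ v ∉ S, c' v = c v) :
    #((⊤ : SimpleGraph α).comap c).edgeFinset + #S * #{v | c v = i} ≤
      #((⊤ : SimpleGraph α).comap c').edgeFinset + #S * #{v | c v = j} + #S * #S := by
  have hlost := card_edgeFinset_comap_sdiff_le hS hc
  have hgained := card_mul_sub_le_card_edgeFinset_comap_sdiff hij hS hc
  have hsplit : #S * #{v | c v = i} = #S * (#{v | c v = i} - #S) + #S * #S := by
    rw [← Nat.mul_add, Nat.sub_add_cancel (card_le_card fun v hv =>
      mem_filter.2 ⟨mem_univ v, (hS v hv).1⟩)]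
  have := card_edgeFinset_add_card_sdiff ((⊤ : SimpleGraph α).comap c)
    ((⊤ : SimpleGraph α).comap c')
  omega

theorem card_mul_card_sub_le_two_mul_card_edgeFinset_sdiff [DecidableEq V] (G H : SimpleGraph V)
    [DecidableRel G.Adj] [DecidableRel H.Adj] {A : Finset V} (hA : G.IsIndepSet A) {b : ℕ}
    (hb : ∀ v ∈ A, #{w ∈ A | ¬H.Adj v w} ≤ b) :
    #A * (#A - b) ≤ 2 * #(H.edgeFinset \ G.edgeFinset) := by
  have hdeg : ∀ v ∈ A, #A - b ≤ (H \ G).degree v := by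
    intro v hv
    have hnbr : {w ∈ A | H.Adj v w} ⊆ (H \ G).neighborFinset v := by
      intro w hw
      obtain ⟨hwA, hvw⟩ := mem_filter.1 hw
      rw [mem_neighborFinset, sdiff_adj]
      exact ⟨hvw, fun h => hA hv hwA h.ne h⟩
    have hsplit := card_filter_add_card_filter_not (s := A) (fun w => H.Adj v w)
    have hle := card_le_card hnbr
    rw [card_neighborFinset_eq_degree] at hle
    have := hb v hv
    omega
  calc #A * (#A - b) = ∑ _v ∈ A, (#A - b) := by rw [sum_const, smul_eq_mul]
    _ ≤ ∑ v, (H \ G).degree v := (sum_le_sum hdeg).trans (sum_le_sum_of_subset (subset_univ A))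
    _ = 2 * #(H.edgeFinset \ G.edgeFinset) := by
      convert (H \ G).sum_degrees_eq_twice_card_edges using 2
      congr 1; ext; simp

theorem card_filter_not_comap_adj_le [DecidableEq α] {d : V → α} {b : ℕ}
    (hd : ∀ a, #{w | d w = a} ≤ b) (A : Finset V) (v : V) :
    #{w ∈ A | ¬((⊤ : SimpleGraph α).comap d).Adj v w} ≤ b := by
  refine le_trans (card_le_card fun w hw => ?_) (hd (d v))
  simp_all [eq_comm]

theorem card_edgeFinset_sdiff_le_card_symmDiff [DecidableEq V] (G H : SimpleGraph V)
    [Fintype G.edgeSet] [Fintype H.edgeSet] :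
    #(H.edgeFinset \ G.edgeFinset) ≤ Nat.card ↑(symmDiff G.edgeSet H.edgeSet) := by
  rw [Nat.card_coe_set_eq, ← Set.ncard_coe_finset, coe_sdiff, coe_edgeFinset, coe_edgeFinset]
  exact Set.ncard_le_ncard Set.subset_union_right (Set.toFinite _)

end SimpleGraph

theorem Fin.card_filter_coe_eq_card_filter_range (n : ℕ) (p : ℕ → Prop) [DecidablePred p] :
    #{x : Fin n | p x} = #{x ∈ range n | p x} := by
  rw [← card_map Fin.valEmbedding, map_filter', map_valEmbedding_univ, Nat.Iio_eq_range]
  congr 1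
  ext x
  simp +contextual [Fin.exists_iff]

theorem card_filter_lt_mod_eq {n N k r : ℕ} (hN : N ≤ n) (hr : r < k) :
    #{x : Fin n | (x : ℕ) < N ∧ (x : ℕ) % k = r} = N / k + if r < N % k then 1 else 0 := by
  have hcount := Nat.count_modEq_card N (by omega : 0 < k) r
  rw [Nat.mod_eq_of_lt hr, Nat.count_eq_card_filter_range] at hcount
  rw [Fin.card_filter_coe_eq_card_filter_range n (fun x => x < N ∧ x % k = r), ← hcount]
  congr 1
  ext x
  simp only [mem_filter, mem_range, Nat.ModEq, Nat.mod_eq_of_lt hr]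
  omega

theorem edgeCount_eq_card_edgeFinset {V : Type*} (G : SimpleGraph V) [Fintype G.edgeSet] :
    edgeCount G = #G.edgeFinset := by
  rw [edgeCount, Nat.card_eq_fintype_card, edgeFinset_card]

section Turan

variable {n k m : ℕ}

def movedColor (k m x : ℕ) : ℕ := if x % k = 1 ∧ x < k * m then 0 else x % k

def movedVertices (n k m : ℕ) : Finset (Fin n) := {x | (x : ℕ) % k = 1 ∧ (x : ℕ) < k * m}

theorem movedColor_eq_zero_iff {x : ℕ} :
    movedColor k m x = 0 ↔ x % k = 0 ∨ x % k = 1 ∧ x < k * m := by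
  unfold movedColor
  split_ifs with h <;> simp [h]

theorem turanGraph_eq_comap (n k : ℕ) :
    turanGraph n k = (⊤ : SimpleGraph ℕ).comap fun x : Fin n => (x : ℕ) % k := by
  ext; simp [turanGraph]

theorem map_turanGraph_eq_comap (σ : Fin n ≃ Fin n) :
    (turanGraph n k).map σ.toEmbedding =
      (⊤ : SimpleGraph ℕ).comap fun x => (σ.symm x : ℕ) % k := by
  rw [← comap_symm, turanGraph_eq_comap, SimpleGraph.comap_comap]
  rfl

theorem movedTuran_eq_comap (n k m : ℕ) :
    movedTuran n k m = (⊤ : SimpleGraph ℕ).comap fun x : Fin n => movedColor k m x := by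
  ext x y
  simp only [movedTuran, fromRel_adj, comap_adj, top_adj, movedColor]
  exact ⟨fun h => h.2.elim id Ne.symm, fun h => ⟨fun hxy => h (hxy ▸ rfl), Or.inl h⟩⟩

theorem card_filter_mod_eq (n : ℕ) {k r : ℕ} (hr : r < k) :
    #{x : Fin n | (x : ℕ) % k = r} = n / k + if r < n % k then 1 else 0 := by
  rw [← card_filter_lt_mod_eq le_rfl hr]
  simp

theorem card_filter_mod_eq_le (n : ℕ) (hk : 0 < k) (r : ℕ) :
    #{x : Fin n | (x : ℕ) % k = r} ≤ #{x : Fin n | (x : ℕ) % k = 0} := by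
  by_cases hr : r < k
  · rw [card_filter_mod_eq n hr, card_filter_mod_eq n hk]
    split_ifs <;> omega
  · rw [filter_false_of_mem fun x _ => by have := Nat.mod_lt x hk; omega, card_empty]
    exact Nat.zero_le _

theorem le_mul_card_filter_mod_eq_zero (n : ℕ) (hk : 0 < k) :
    n ≤ k * #{x : Fin n | (x : ℕ) % k = 0} := by
  rw [card_filter_mod_eq n hk, mul_add]
  have := Nat.div_add_mod n k
  have := Nat.mod_lt n hk
  split_ifs <;> omega

theorem card_movedVertices (hk : 1 < k) (hkm : k * m ≤ n) : #(movedVertices n k m) = m := by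
  rw [movedVertices, filter_congr fun x _ => and_comm, card_filter_lt_mod_eq hkm hk]
  simp [Nat.mul_div_cancel_left m (by omega : 0 < k)]

theorem tk_le_edgeCount_movedTuran (hk : 2 ≤ k) (hkm : k * m ≤ n) :
    tk k n ≤ edgeCount (movedTuran n k m) + m * m + m := by
  have hrecolor := card_edgeFinset_comap_add_le (c := fun x : Fin n => (x : ℕ) % k)
    (c' := fun x => movedColor k m x) (S := movedVertices n k m) (i := 1) (j := 0) one_ne_zero
    (fun x hx => by simp_all [movedVertices, movedColor])
    (fun x hx => by simp_all [movedVertices, movedColor])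
  rw [card_movedVertices hk hkm] at hrecolor
  have hclasses : #{x : Fin n | (x : ℕ) % k = 0} ≤ #{x : Fin n | (x : ℕ) % k = 1} + 1 := by
    rw [card_filter_mod_eq n (by omega : 0 < k), card_filter_mod_eq n hk]
    split_ifs <;> omega
  rw [tk, turanGraph_eq_comap, movedTuran_eq_comap, edgeCount_eq_card_edgeFinset,
    edgeCount_eq_card_edgeFinset]
  nlinarith

theorem mul_le_card_symmDiff_movedTuran (hk : 2 ≤ k) (hkm : k * m ≤ n) (σ : Fin n ≃ Fin n) :
    m * n ≤ 2 * k * Nat.card ↑(symmDiff (movedTuran n k m).edgeSet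
      ((turanGraph n k).map σ.toEmbedding).edgeSet) := by
  rw [movedTuran_eq_comap, map_turanGraph_eq_comap]
  set r₀ := #{x : Fin n | (x : ℕ) % k = 0}
  set A : Finset (Fin n) := {x | movedColor k m x = 0}
  have hA : #A = r₀ + m := by
    rw [← card_movedVertices hk hkm, movedVertices, ← card_union_of_disjoint, ← filter_or]
    · exact congrArg card (filter_congr fun x _ => movedColor_eq_zero_iff)
    · exact disjoint_filter.2 fun x _ h0 h1 => by omega
  have hindep : ((⊤ : SimpleGraph ℕ).comap fun x : Fin n => movedColor k m x).IsIndepSet A := by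
    intro x hx y hy _
    simp_all [A]
  have hparts : ∀ a, #{x : Fin n | (σ.symm x : ℕ) % k = a} ≤ r₀ := by
    intro a
    rw [show ({x | (σ.symm x : ℕ) % k = a} : Finset (Fin n)) =
        ({x | (x : ℕ) % k = a} : Finset (Fin n)).map σ.toEmbedding by ext; simp [mem_map_equiv],
      card_map]
    exact card_filter_mod_eq_le n (by omega) a
  have hsdiff := (card_mul_card_sub_le_two_mul_card_edgeFinset_sdiff _ _ hindep
    fun v _ => card_filter_not_comap_adj_le hparts A v).trans
    (Nat.mul_le_mul_left 2 (card_edgeFinset_sdiff_le_card_symmDiff _ _))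
  rw [hA, Nat.add_sub_cancel_left] at hsdiff
  have hn : n ≤ k * r₀ := le_mul_card_filter_mod_eq_zero n (by omega)
  calc m * n ≤ m * (k * r₀) := Nat.mul_le_mul_left _ hn
    _ = k * (r₀ * m) := by ring
    _ ≤ k * ((r₀ + m) * m) := by gcongr; exact Nat.le_add_right _ _
    _ ≤ k * (2 * _) := Nat.mul_le_mul_left _ hsdiff
    _ = _ := by ring

end Turan

theorem Asymptotics.IsLittleO.eventually_mul_sqrt_le {f : ℕ → ℝ}
    (hf : (fun n => f n) =o[atTop] fun n => (n : ℝ) ^ 2) {c : ℝ} (hc : 0 < c) :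
    ∀ᶠ n : ℕ in atTop, c * √(f n) ≤ n := by
  filter_upwards [hf.def (pow_pos (inv_pos.2 hc) 2)] with n hn
  rw [Real.norm_eq_abs, norm_pow, Real.norm_natCast] at hn
  have hsqrt : √(f n) ≤ c⁻¹ * n :=
    Real.sqrt_le_iff.2 ⟨by positivity, by linarith [le_abs_self (f n), mul_pow c⁻¹ (n : ℝ) 2]⟩
  calc c * √(f n) ≤ c * (c⁻¹ * n) := by gcongr
    _ = n := by field_simp

theorem stmt11 (k : ℕ) (hk : 2 ≤ k) (f : ℕ → ℝ)
    (hf : (fun n => f n) =o[atTop] fun n => (n : ℝ) ^ 2)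
    (hf2 : ∀ n : ℕ, 2 * (n : ℝ) ≤ f n) :
    ∃ C : ℝ, 0 < C ∧ ∃ c : ℝ, 0 < c ∧ ∀ᶠ n : ℕ in atTop,
      (tk k n : ℝ) - C * f n ≤ (edgeCount (movedTuran n k ⌈Real.sqrt (f n)⌉₊) : ℝ) ∧
      ∀ σ : Fin n ≃ Fin n,
        c * Real.sqrt (f n) * n ≤
          (Nat.card ↑(symmDiff (movedTuran n k ⌈Real.sqrt (f n)⌉₊).edgeSet
            ((turanGraph n k).map σ.toEmbedding).edgeSet) : ℝ) := by
  refine ⟨6, by norm_num, 1 / (2 * k), by positivity, ?_⟩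
  filter_upwards [hf.eventually_mul_sqrt_le (c := 2 * k) (by positivity),
    eventually_ge_atTop 1] with n hsqrt hn
  set m := ⌈√(f n)⌉₊
  have hf₁ : 1 ≤ f n := by linarith [hf2 n, (Nat.one_le_cast (α := ℝ)).2 hn]
  have hsqrt₁ : 1 ≤ √(f n) := Real.one_le_sqrt.2 hf₁
  have hm : (m : ℝ) ≤ 2 * √(f n) := by linarith [Nat.ceil_lt_add_one (Real.sqrt_nonneg (f n))]
  have hkm : k * m ≤ n := by
    have : (k : ℝ) * m ≤ n := by
      calc (k : ℝ) * m ≤ k * (2 * √(f n)) := by gcongr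
        _ ≤ n := by linarith
    exact_mod_cast this
  refine ⟨?_, fun σ => ?_⟩
  · have hA : (tk k n : ℝ) ≤ edgeCount (movedTuran n k m) + m * m + m := by
      exact_mod_cast tk_le_edgeCount_movedTuran hk hkm
    nlinarith [Real.sq_sqrt (by linarith : 0 ≤ f n)]
  · have hB : (m : ℝ) * n ≤ 2 * k * Nat.card ↑(symmDiff (movedTuran n k m).edgeSet
        ((turanGraph n k).map σ.toEmbedding).edgeSet) := by
      exact_mod_cast mul_le_card_symmDiff_movedTuran hk hkm σ
    calc 1 / (2 * k) * √(f n) * n ≤ 1 / (2 * k) * m * n := by gcongr; exact Nat.le_ceil _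
      _ ≤ _ := by
        rw [div_mul_eq_mul_div, div_mul_eq_mul_div, div_le_iff₀ (by positivity)]
        linarith
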